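/- For any nonnegative integer N and ν ∈ {0,1}, Σ_{k=−N}^{N+ν} q^{2k²−k} / ((q²;q²)_{N+k} (q²;q²)_{N+ν−k}) = 1/(q;q)_{2N+ν}. -/

import Mathlib

/-!
Let `T n` be the left-hand side for `n = 2N + ν`. Since `a + b = n` in every term,
`1 - q^{2n} = (1 - q^{2b}) + q^{2b} (1 - q^{2a})` splits `1/((q²;q²)_a (q²;q²)_b)` Pascal-style,
and after the reflection `k ↦ 1 - k` (`n` odd) or `k ↦ -k` (`n` even) the second half of the
split sum is `q^n T (n - 1)`. So `(1 - q^{2n}) T n = (1 + q^n) T (n - 1)`, i.e.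
`(1 - q^n) T n = T (n - 1)`, and the identity follows by induction on `n`.
-/

open Finset PowerSeries

/-- A partition represented as a non-increasing list of positive integers. -/
def IsPartitionList (L : List ℕ) : Prop :=
  L.Pairwise (· ≥ ·) ∧ ∀ x ∈ L, 0 < x

/-- A partition into distinct parts (strict partition). -/
def IsStrictPartitionList (L : List ℕ) : Prop :=
  L.Pairwise (· > ·) ∧ ∀ x ∈ L, 0 < x

/-- BG-rank: (# odd parts in odd (1-based) positions) − (# odd parts in even positions). -/
def bgRank (L : List ℕ) : ℤ :=
  (((L.zipIdx.map Prod.swap).filter (fun p => p.2 % 2 == 1 && p.1 % 2 == 0)).length : ℤ) -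
  (((L.zipIdx.map Prod.swap).filter (fun p => p.2 % 2 == 1 && p.1 % 2 == 1)).length : ℤ)

/-- Length of the `j`-th (1-based) column of the shifted Young diagram of `L`:
row `i` (1-based) occupies columns `i, …, i + λ_i - 1`. -/
def shiftedCol (L : List ℕ) (j : ℕ) : ℕ :=
  ((Finset.range L.length).filter (fun i => i + 1 ≤ j ∧ j ≤ i + L.getD i 0)).card

/-- Alternating sum `∑_{i=1}^{m} (-1)^i c_i` of shifted column lengths. -/
def altColSum (L : List ℕ) (m : ℕ) : ℤ :=
  ∑ i ∈ Finset.range m, (-1 : ℤ) ^ (i + 1) * (shiftedCol L (i + 1) : ℤ)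

/-- An (a,b)-sequence: `d_i = a + i` for `1 ≤ i ≤ b`, non-increasing from index `b`,
positive entries, and alternating sum zero. (0-based indexing via `getD`.) -/
def IsABSeq (a b : ℕ) (d : List ℕ) : Prop :=
  1 ≤ b ∧ b ≤ d.length ∧ (∀ x ∈ d, 0 < x) ∧
  (∀ i < b, d.getD i 0 = a + i + 1) ∧
  (∀ i j, b - 1 ≤ i → i ≤ j → j < d.length → d.getD j 0 ≤ d.getD i 0) ∧
  (∑ i ∈ Finset.range d.length, (-1 : ℤ) ^ (i + 1) * (d.getD i 0 : ℤ)) = 0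

/-- The quantities `b_i`: `b_1 = d_1`, `b_i = d_i - b_{i-1}` (0-based: `bAux d (i-1) = b_i`). -/
def bAux (d : List ℕ) : ℕ → ℤ
  | 0 => (d.getD 0 0 : ℤ)
  | n + 1 => (d.getD (n + 1) 0 : ℤ) - bAux d n

/-- The q-Pochhammer symbol `(q²; q²)_n` as a power series in `q`. -/
noncomputable def qq2Poch (n : ℕ) : PowerSeries ℚ :=
  ∏ i ∈ Finset.range n, (1 - (PowerSeries.X : PowerSeries ℚ) ^ (2 * (i + 1)))

/-- The Gaussian binomial coefficient `[m choose n]_{q²}` as a power series in `q`,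
zero unless `0 ≤ n ≤ m`. -/
noncomputable def gaussBinom2 (m : ℕ) (n : ℤ) : PowerSeries ℚ :=
  if 0 ≤ n ∧ n ≤ (m : ℤ) then
    qq2Poch m * (qq2Poch n.toNat * qq2Poch (m - n.toNat))⁻¹
  else 0

lemma qq2Poch_succ (n : ℕ) : qq2Poch (n + 1) = qq2Poch n * (1 - X ^ (2 * (n + 1))) :=
  prod_range_succ _ n

lemma inv_qq2Poch_mul (n : ℕ) (φ : ℚ⟦X⟧) :
    (qq2Poch n * φ)⁻¹ = (1 - X ^ (2 * (n + 1))) * (qq2Poch (n + 1) * φ)⁻¹ := by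
  have hunit : constantCoeff (1 - X ^ (2 * (n + 1)) : ℚ⟦X⟧) ≠ 0 := by simp
  rw [qq2Poch_succ, mul_right_comm, PowerSeries.mul_inv_rev (qq2Poch n * φ), ← mul_assoc,
    PowerSeries.mul_inv_cancel _ hunit, one_mul]

/-- `1/((q²;q²)_a (q²;q²)_b)`; the zero extension lets the sums below run over all of `ℤ`. -/
noncomputable def invPochPair (a b : ℤ) : ℚ⟦X⟧ :=
  if 0 ≤ a ∧ 0 ≤ b then (qq2Poch a.toNat * qq2Poch b.toNat)⁻¹ else 0

lemma invPochPair_comm (a b : ℤ) : invPochPair a b = invPochPair b a := by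
  simp only [invPochPair, and_comm, mul_comm]

lemma invPochPair_of_neg {a b : ℤ} (h : a < 0 ∨ b < 0) : invPochPair a b = 0 :=
  if_neg (by omega)

lemma invPochPair_natCast (a b : ℕ) : invPochPair a b = (qq2Poch a * qq2Poch b)⁻¹ := by
  simp [invPochPair]

/-- For `a = 0` both sides vanish: the factor `1 - q^0` is zero. -/
lemma invPochPair_sub_one_left (a b : ℤ) :
    invPochPair (a - 1) b = (1 - X ^ (2 * a).toNat) * invPochPair a b := by
  by_cases hab : 0 ≤ a ∧ 0 ≤ b
  · obtain ⟨m, rfl⟩ := Int.eq_ofNat_of_zero_le hab.1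
    obtain ⟨n, rfl⟩ := Int.eq_ofNat_of_zero_le hab.2
    rcases m with _ | m
    · simp [invPochPair_of_neg]
    · rw [show ((m + 1 : ℕ) : ℤ) - 1 = m by push_cast; ring,
        show (2 * ((m + 1 : ℕ) : ℤ)).toNat = 2 * (m + 1) by omega,
        invPochPair_natCast, invPochPair_natCast, inv_qq2Poch_mul]
  · rw [invPochPair_of_neg (by omega), invPochPair_of_neg (by omega), mul_zero]

lemma invPochPair_sub_one_right (a b : ℤ) :
    invPochPair a (b - 1) = (1 - X ^ (2 * b).toNat) * invPochPair a b := by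
  rw [invPochPair_comm, invPochPair_sub_one_left, invPochPair_comm]

lemma X_pow_two_mul_add_toNat {a b : ℤ} (ha : 0 ≤ a) (hb : 0 ≤ b) :
    (X : ℚ⟦X⟧) ^ (2 * (a + b)).toNat = X ^ (2 * a).toNat * X ^ (2 * b).toNat := by
  rw [← pow_add]
  congr 1
  omega

lemma one_sub_mul_invPochPair (a b : ℤ) :
    (1 - X ^ (2 * (a + b)).toNat) * invPochPair a b =
      invPochPair a (b - 1) + X ^ (2 * b).toNat * invPochPair (a - 1) b := by
  by_cases hab : 0 ≤ a ∧ 0 ≤ b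
  · rw [invPochPair_sub_one_left, invPochPair_sub_one_right,
      X_pow_two_mul_add_toNat hab.1 hab.2]
    ring
  · simp only [invPochPair_of_neg (by omega : a < 0 ∨ b < 0),
      invPochPair_of_neg (by omega : a < 0 ∨ b - 1 < 0),
      invPochPair_of_neg (by omega : a - 1 < 0 ∨ b < 0), mul_zero, add_zero]

lemma one_sub_mul_invPochPair' (a b : ℤ) :
    (1 - X ^ (2 * (a + b)).toNat) * invPochPair a b =
      invPochPair (a - 1) b + X ^ (2 * a).toNat * invPochPair a (b - 1) := by
  rw [invPochPair_comm, add_comm, one_sub_mul_invPochPair, invPochPair_comm,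
    invPochPair_comm (b - 1)]

lemma hasFiniteSupport_mul_invPochPair (f : ℤ → ℚ⟦X⟧) (m n : ℤ) :
    (fun k ↦ f k * invPochPair (m + k) (n - k)).HasFiniteSupport := by
  refine (Set.finite_Icc (-m) n).subset (Function.support_subset_iff'.2 fun k hk ↦ ?_)
  rw [Set.mem_Icc] at hk
  rw [invPochPair_of_neg (by omega), mul_zero]

noncomputable def bgSum (m n : ℕ) : ℚ⟦X⟧ :=
  ∑ᶠ k : ℤ, X ^ (2 * k ^ 2 - k).toNat * invPochPair (m + k) (n - k)

lemma bgSum_eq_sum_Icc (m n : ℕ) :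
    bgSum m n = ∑ k ∈ Icc (-(m : ℤ)) n,
      X ^ (2 * k ^ 2 - k).toNat *
        (qq2Poch ((m : ℤ) + k).toNat * qq2Poch ((n : ℤ) - k).toNat)⁻¹ := by
  rw [bgSum, finsum_eq_sum_of_support_subset _ (s := Icc (-(m : ℤ)) n)]
  · refine sum_congr rfl fun k hk ↦ ?_
    rw [mem_Icc] at hk
    rw [invPochPair, if_pos (by omega)]
  · refine Function.support_subset_iff'.2 fun k hk ↦ ?_
    rw [coe_Icc, Set.mem_Icc] at hk
    rw [invPochPair_of_neg (by omega), mul_zero]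

lemma two_mul_sq_sub_self_nonneg (k : ℤ) : 0 ≤ 2 * k ^ 2 - k := by
  nlinarith [sq_nonneg k]

lemma one_sub_mul_bgSum_odd (N : ℕ) :
    (1 - X ^ (2 * (2 * N + 1))) * bgSum N (N + 1) = (1 + X ^ (2 * N + 1)) * bgSum N N := by
  have hreflect : ∀ k : ℤ,
      X ^ (2 * (1 - k) ^ 2 - (1 - k)).toNat * X ^ (2 * (N + 1 - (1 - k))).toNat *
        invPochPair (N - 1 + (1 - k)) (N + 1 - (1 - k)) =
      X ^ (2 * N + 1) * (X ^ (2 * k ^ 2 - k).toNat * invPochPair (N + k) (N - k)) := by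
    intro k
    rw [show (N : ℤ) - 1 + (1 - k) = N - k by ring, show (N : ℤ) + 1 - (1 - k) = N + k by ring,
      invPochPair_comm]
    by_cases hk : 0 ≤ (N : ℤ) + k
    · rw [← mul_assoc, ← pow_add, ← pow_add]
      have := two_mul_sq_sub_self_nonneg k
      have := two_mul_sq_sub_self_nonneg (1 - k)
      congr 2
      grind
    · rw [invPochPair_of_neg (Or.inl (by omega : (N : ℤ) + k < 0)), mul_zero, mul_zero, mul_zero]
  have hsecond : ∑ᶠ k : ℤ, X ^ (2 * k ^ 2 - k).toNat * X ^ (2 * (N + 1 - k)).toNat *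
        invPochPair (N - 1 + k) (N + 1 - k) = X ^ (2 * N + 1) * bgSum N N := by
    rw [← finsum_comp_equiv (Equiv.subLeft 1), bgSum, mul_finsum]
    simp only [Equiv.subLeft_apply, hreflect]
  calc (1 - X ^ (2 * (2 * N + 1))) * bgSum N (N + 1)
      = ∑ᶠ k : ℤ, (X ^ (2 * k ^ 2 - k).toNat * invPochPair (N + k) (N - k) +
          X ^ (2 * k ^ 2 - k).toNat * X ^ (2 * (N + 1 - k)).toNat *
            invPochPair (N - 1 + k) (N + 1 - k)) := by
        rw [bgSum, mul_finsum]
        push_cast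
        refine finsum_congr fun k ↦ ?_
        rw [mul_left_comm, show 2 * (2 * N + 1) = (2 * ((N + k) + (N + 1 - k))).toNat by omega,
          one_sub_mul_invPochPair, show (N : ℤ) + 1 - k - 1 = N - k by ring,
          show (N : ℤ) + k - 1 = N - 1 + k by ring]
        ring
    _ = (1 + X ^ (2 * N + 1)) * bgSum N N := by
        rw [finsum_add_distrib (hasFiniteSupport_mul_invPochPair _ _ _)
          (hasFiniteSupport_mul_invPochPair _ _ _), ← bgSum, hsecond, add_mul, one_mul]

lemma one_sub_mul_bgSum_even (N : ℕ) :
    (1 - X ^ (2 * (2 * N + 2))) * bgSum (N + 1) (N + 1) =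
      (1 + X ^ (2 * N + 2)) * bgSum N (N + 1) := by
  have hreflect : ∀ k : ℤ,
      X ^ (2 * (-k) ^ 2 - -k).toNat * X ^ (2 * (N + 1 + -k)).toNat *
        invPochPair (N + 1 + -k) (N - -k) =
      X ^ (2 * N + 2) * (X ^ (2 * k ^ 2 - k).toNat * invPochPair (N + k) (N + 1 - k)) := by
    intro k
    rw [show (N : ℤ) + 1 + -k = N + 1 - k by ring, show (N : ℤ) - -k = N + k by ring,
      invPochPair_comm]
    by_cases hk : 0 ≤ (N : ℤ) + k ∧ 0 ≤ (N : ℤ) + 1 - k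
    · rw [← mul_assoc, ← pow_add, ← pow_add]
      have := two_mul_sq_sub_self_nonneg k
      have := two_mul_sq_sub_self_nonneg (-k)
      congr 2
      grind
    · rw [invPochPair_of_neg (by omega : (N : ℤ) + k < 0 ∨ (N : ℤ) + 1 - k < 0), mul_zero,
        mul_zero, mul_zero]
  have hsecond : ∑ᶠ k : ℤ, X ^ (2 * k ^ 2 - k).toNat * X ^ (2 * (N + 1 + k)).toNat *
        invPochPair (N + 1 + k) (N - k) = X ^ (2 * N + 2) * bgSum N (N + 1) := by
    rw [← finsum_comp_equiv (Equiv.neg ℤ), bgSum, mul_finsum]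
    push_cast
    simp only [Equiv.neg_apply, hreflect]
  calc (1 - X ^ (2 * (2 * N + 2))) * bgSum (N + 1) (N + 1)
      = ∑ᶠ k : ℤ, (X ^ (2 * k ^ 2 - k).toNat * invPochPair (N + k) (N + 1 - k) +
          X ^ (2 * k ^ 2 - k).toNat * X ^ (2 * (N + 1 + k)).toNat *
            invPochPair (N + 1 + k) (N - k)) := by
        rw [bgSum, mul_finsum]
        push_cast
        refine finsum_congr fun k ↦ ?_
        rw [mul_left_comm,
          show 2 * (2 * N + 2) = (2 * ((N + 1 + k) + (N + 1 - k))).toNat by omega,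
          one_sub_mul_invPochPair', show (N : ℤ) + 1 + k - 1 = N + k by ring,
          show (N : ℤ) + 1 - k - 1 = N - k by ring]
        ring
    _ = (1 + X ^ (2 * N + 2)) * bgSum N (N + 1) := by
        rw [finsum_add_distrib (hasFiniteSupport_mul_invPochPair _ _ _)
          (hasFiniteSupport_mul_invPochPair _ _ _), hsecond, bgSum]
        push_cast
        ring

lemma one_sub_X_pow_mul_eq_of_one_sub_X_pow_two_mul {S T : ℚ⟦X⟧} (n : ℕ)
    (h : (1 - X ^ (2 * n)) * S = (1 + X ^ n) * T) : (1 - X ^ n) * S = T := by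
  have hne : (1 + X ^ n : ℚ⟦X⟧) ≠ 0 := fun h0 ↦ by
    have := congrArg constantCoeff h0
    rcases n with _ | n <;> simp at this
  refine mul_left_cancel₀ hne ?_
  rw [← h]
  ring

lemma one_sub_mul_bgSum_succ (n : ℕ) :
    (1 - X ^ (n + 1)) * bgSum ((n + 1) / 2) ((n + 1 + 1) / 2) = bgSum (n / 2) ((n + 1) / 2) := by
  apply one_sub_X_pow_mul_eq_of_one_sub_X_pow_two_mul
  obtain ⟨N, rfl | rfl⟩ := Nat.even_or_odd' n
  · rw [show (2 * N + 1) / 2 = N by omega, show (2 * N + 1 + 1) / 2 = N + 1 by omega,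
      show 2 * N / 2 = N by omega]
    exact one_sub_mul_bgSum_odd N
  · rw [show (2 * N + 1 + 1) / 2 = N + 1 by omega, show (2 * N + 1 + 1 + 1) / 2 = N + 1 by omega,
      show (2 * N + 1) / 2 = N by omega]
    exact one_sub_mul_bgSum_even N

lemma prod_one_sub_X_pow_mul_bgSum (n : ℕ) :
    (∏ j ∈ range n, (1 - X ^ (j + 1))) * bgSum (n / 2) ((n + 1) / 2) = 1 := by
  induction n with
  | zero => simp [bgSum_eq_sum_Icc, qq2Poch]
  | succ n ih => rw [prod_range_succ, mul_assoc, one_sub_mul_bgSum_succ, ih]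

/-- `∑_{k=−N}^{N+ν} q^{2k²−k}/((q²;q²)_{N+k}(q²;q²)_{N+ν−k}) = 1/(q;q)_{2N+ν}`. -/
theorem sum_over_bgRank_unrestricted (N : ℕ) (ν : ℕ) (hν : ν = 0 ∨ ν = 1) :
    ∑ k ∈ Finset.Icc (-(N : ℤ)) ((N : ℤ) + ν),
        (PowerSeries.X : PowerSeries ℚ) ^ (2 * k ^ 2 - k).toNat *
          (qq2Poch ((N : ℤ) + k).toNat * qq2Poch ((N : ℤ) + ν - k).toNat)⁻¹ =
      (∏ j ∈ Finset.range (2 * N + ν), (1 - (PowerSeries.X : PowerSeries ℚ) ^ (j + 1)))⁻¹ := by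
  have h := prod_one_sub_X_pow_mul_bgSum (2 * N + ν)
  rw [show (2 * N + ν) / 2 = N by omega, show (2 * N + ν + 1) / 2 = N + ν by omega,
    bgSum_eq_sum_Icc, mul_comm] at h
  push_cast at h
  exact (PowerSeries.eq_inv_iff_mul_eq_one (by simp [map_prod])).2 h
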